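/- Let n ≥ 2, k ≥ 1, and let c : Fin n → ((Fin n → Fin k) → ℝ) be the payoff functions of an n-player finite game in which every player has strategy set Fin k. The game is potential if and only if every bi-matrix sub-game is potential; that is, if and only if for all players i ≠ j and every strategy profile s : Fin n → Fin k, the bi-matrix game with payoff matrices A, B : Matrix (Fin k) (Fin k) ℝ defined by A x y = c i (update (update s i x) j y) and B x y = c j (update (update s i x) j y) is potential. -/
import Mathlib


/-- A bi-matrix game `(C1, C2)` is potential if it admits a potential matrix `P`. -/
def IsPotentialBimatrix {k1 k2 : ℕ} (C1 C2 : Matrix (Fin k1) (Fin k2) ℝ) : Prop :=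
  ∃ P : Matrix (Fin k1) (Fin k2) ℝ,
    (∀ i i' : Fin k1, ∀ j : Fin k2, C1 i j - C1 i' j = P i j - P i' j) ∧
    (∀ i : Fin k1, ∀ j j' : Fin k2, C2 i j - C2 i j' = P i j - P i j')

/-- An `n`-player finite game with payoff functions `c` (each player has strategy
set `Fin k`) is potential if it admits a potential function `p`. -/
def IsPotentialGame {n k : ℕ} (c : Fin n → (Fin n → Fin k) → ℝ) : Prop :=
  ∃ p : (Fin n → Fin k) → ℝ,
    ∀ (i : Fin n) (s : Fin n → Fin k) (x y : Fin k),
      c i (Function.update s i x) - c i (Function.update s i y) =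
        p (Function.update s i x) - p (Function.update s i y)

namespace Stmt13Aux

variable {n k : ℕ}

/-- The profile agreeing with `s` on coordinates `< m` and equal to the base
strategy `0` elsewhere. -/
def sig (hk : 1 ≤ k) (m : ℕ) (s : Fin n → Fin k) : Fin n → Fin k :=
  fun t => if (t : ℕ) < m then s t else ⟨0, hk⟩

lemma sig_update_of_le (hk : 1 ≤ k) {m : ℕ} {i : Fin n} (h : m ≤ (i : ℕ))
    (s : Fin n → Fin k) (x : Fin k) :
    sig hk m (Function.update s i x) = sig hk m s := by
  funext t
  simp only [sig]
  by_cases ht : (t : ℕ) < m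
  · have hti : t ≠ i := by
      intro he
      subst he
      omega
    simp [ht, Function.update_of_ne hti]
  · simp [ht]

lemma sig_update_of_gt (hk : 1 ≤ k) {m : ℕ} {i : Fin n} (h : (i : ℕ) < m)
    (s : Fin n → Fin k) (x : Fin k) :
    sig hk m (Function.update s i x) = Function.update (sig hk m s) i x := by
  funext t
  by_cases ht : t = i
  · subst ht
    simp [sig, h]
  · simp [sig, Function.update_of_ne ht]

lemma sig_succ (hk : 1 ≤ k) (m : Fin n) (s : Fin n → Fin k) :
    sig hk ((m : ℕ) + 1) s = Function.update (sig hk (m : ℕ) s) m (s m) := by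
  funext t
  by_cases ht : t = m
  · subst ht
    simp [sig]
  · have htv : (t : ℕ) ≠ (m : ℕ) := fun he => ht (Fin.ext he)
    have hiff : ((t : ℕ) < (m : ℕ) + 1) ↔ ((t : ℕ) < (m : ℕ)) := by omega
    simp [sig, Function.update_of_ne ht, hiff]

lemma sig_self (hk : 1 ≤ k) (s : Fin n → Fin k) : sig hk n s = s := by
  funext t
  simp [sig, t.isLt]

lemma sig_apply_self (hk : 1 ≤ k) (m : Fin n) (s : Fin n → Fin k) :
    sig hk (m : ℕ) s m = ⟨0, hk⟩ := by
  simp [sig]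

end Stmt13Aux

theorem stmt13 (n k : ℕ) (hn : 2 ≤ n) (hk : 1 ≤ k)
    (c : Fin n → (Fin n → Fin k) → ℝ) :
    IsPotentialGame c ↔
      ∀ i j : Fin n, i ≠ j → ∀ s : Fin n → Fin k,
        IsPotentialBimatrix
          (Matrix.of fun x y => c i (Function.update (Function.update s i x) j y))
          (Matrix.of fun x y => c j (Function.update (Function.update s i x) j y)) := by
  classical
  constructor
  · rintro ⟨p, hp⟩ i j hij s
    refine ⟨Matrix.of fun x y => p (Function.update (Function.update s i x) j y), ?_, ?_⟩
    · intro x x' y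
      have h1 : Function.update (Function.update s i x) j y
          = Function.update (Function.update s j y) i x := Function.update_comm hij x y s
      have h2 : Function.update (Function.update s i x') j y
          = Function.update (Function.update s j y) i x' := Function.update_comm hij x' y s
      simp only [Matrix.of_apply, h1, h2]
      exact hp i (Function.update s j y) x x'
    · intro x y y'
      simp only [Matrix.of_apply]
      exact hp j (Function.update s i x) y y'
  · intro H
    refine ⟨fun s => ∑ m : Fin n,
      (c m (Stmt13Aux.sig hk ((m : ℕ) + 1) s) - c m (Stmt13Aux.sig hk (m : ℕ) s)), ?_⟩
    intro i s x y
    set sx := Function.update s i x with hsx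
    set sy := Function.update s i y with hsy
    set f : ℕ → ℝ := fun m =>
      c i (Function.update (Stmt13Aux.sig hk m s) i x)
        - c i (Function.update (Stmt13Aux.sig hk m s) i y) with hf
    set G : ℕ → ℝ := fun m => if (i : ℕ) < m then f m else 0 with hG
    have key : ∀ m : Fin n,
        (c m (Stmt13Aux.sig hk ((m : ℕ) + 1) sx) - c m (Stmt13Aux.sig hk (m : ℕ) sx))
          - (c m (Stmt13Aux.sig hk ((m : ℕ) + 1) sy) - c m (Stmt13Aux.sig hk (m : ℕ) sy))
          = G ((m : ℕ) + 1) - G (m : ℕ) := by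
      intro m
      rcases lt_trichotomy (m : ℕ) (i : ℕ) with hlt | heq | hgt
      · -- m < i : nothing changes
        rw [hsx, hsy,
          Stmt13Aux.sig_update_of_le hk (by omega) s x,
          Stmt13Aux.sig_update_of_le hk (by omega) s x,
          Stmt13Aux.sig_update_of_le hk (by omega) s y,
          Stmt13Aux.sig_update_of_le hk (by omega) s y]
        have h1 : ¬ (i : ℕ) < (m : ℕ) + 1 := by omega
        have h2 : ¬ (i : ℕ) < (m : ℕ) := by omega
        simp only [hG, if_neg h1, if_neg h2]
        ring
      · -- m = i
        obtain rfl : m = i := Fin.ext heq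
        rw [hsx, hsy,
          Stmt13Aux.sig_update_of_gt hk (by omega) s x,
          Stmt13Aux.sig_update_of_gt hk (by omega) s y,
          Stmt13Aux.sig_update_of_le hk (le_refl _) s x,
          Stmt13Aux.sig_update_of_le hk (le_refl _) s y]
        have h1 : (m : ℕ) < (m : ℕ) + 1 := by omega
        simp only [hG, hf, if_pos h1, if_neg (lt_irrefl (m : ℕ))]
        ring
      · -- i < m : use the bimatrix subgame at (i, m) and profile sig m s
        have hne : i ≠ m := by
          intro he
          rw [he] at hgt
          exact lt_irrefl _ hgt
        obtain ⟨P, hP1, hP2⟩ := H i m hne (Stmt13Aux.sig hk (m : ℕ) s)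
        simp only [Matrix.of_apply] at hP1 hP2
        set t := Stmt13Aux.sig hk (m : ℕ) s with ht
        have e0 : t m = ⟨0, hk⟩ := Stmt13Aux.sig_apply_self hk m s
        -- canonical forms
        have exm : ∀ z : Fin k, Function.update t i z
            = Function.update (Function.update t i z) m ⟨0, hk⟩ := by
          intro z
          funext u
          by_cases hu : u = m
          · subst hu
            rw [Function.update_self, Function.update_of_ne (Ne.symm hne), e0]
          · rw [Function.update_of_ne hu]
        have exs : ∀ z : Fin k, Function.update (Stmt13Aux.sig hk ((m : ℕ) + 1) s) i z
            = Function.update (Function.update t i z) m (s m) := by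
          intro z
          rw [Stmt13Aux.sig_succ hk m s, ← ht, Function.update_comm (Ne.symm hne)]
        have exsx : Stmt13Aux.sig hk ((m : ℕ) + 1) sx
            = Function.update (Function.update t i x) m (s m) := by
          rw [hsx, Stmt13Aux.sig_update_of_gt hk (by omega) s x, exs]
        have exsy : Stmt13Aux.sig hk ((m : ℕ) + 1) sy
            = Function.update (Function.update t i y) m (s m) := by
          rw [hsy, Stmt13Aux.sig_update_of_gt hk (by omega) s y, exs]
        have exmx : Stmt13Aux.sig hk (m : ℕ) sx = Function.update t i x := by
          rw [hsx, Stmt13Aux.sig_update_of_gt hk hgt s x, ht]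
        have exmy : Stmt13Aux.sig hk (m : ℕ) sy = Function.update t i y := by
          rw [hsy, Stmt13Aux.sig_update_of_gt hk hgt s y, ht]
        have h1 : (i : ℕ) < (m : ℕ) + 1 := by omega
        simp only [hG, hf, if_pos h1, if_pos hgt, exsx, exsy, exmx, exmy, exs]
        rw [exm x, exm y]
        simp only [Function.update_idem]
        have b1 := hP2 x (s m) ⟨0, hk⟩
        have b2 := hP2 y (s m) ⟨0, hk⟩
        have a1 := hP1 x y (s m)
        have a2 := hP1 x y ⟨0, hk⟩
        linarith
    have sum_eq :
        (∑ m : Fin n, (c m (Stmt13Aux.sig hk ((m : ℕ) + 1) sx)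
            - c m (Stmt13Aux.sig hk (m : ℕ) sx)))
          - (∑ m : Fin n, (c m (Stmt13Aux.sig hk ((m : ℕ) + 1) sy)
            - c m (Stmt13Aux.sig hk (m : ℕ) sy)))
          = ∑ m : Fin n, (G ((m : ℕ) + 1) - G (m : ℕ)) := by
      rw [← Finset.sum_sub_distrib]
      exact Finset.sum_congr rfl fun m _ => key m
    have tele : (∑ m : Fin n, (G ((m : ℕ) + 1) - G (m : ℕ))) = G n - G 0 := by
      rw [Fin.sum_univ_eq_sum_range (fun m => G (m + 1) - G m) n]
      exact Finset.sum_range_sub G n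
    have hGn : G n = f n := if_pos i.isLt
    have hG0 : G 0 = 0 := if_neg (by omega)
    have hfn : f n = c i (Function.update s i x) - c i (Function.update s i y) := by
      simp only [hf, Stmt13Aux.sig_self hk s]
    have : (∑ m : Fin n, (c m (Stmt13Aux.sig hk ((m : ℕ) + 1) sx)
            - c m (Stmt13Aux.sig hk (m : ℕ) sx)))
          - (∑ m : Fin n, (c m (Stmt13Aux.sig hk ((m : ℕ) + 1) sy)
            - c m (Stmt13Aux.sig hk (m : ℕ) sy)))
          = c i (Function.update s i x) - c i (Function.update s i y) := by
      rw [sum_eq, tele, hGn, hG0, hfn]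
      ring
    simpa [hsx, hsy] using this.symm
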